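/- Let R be a commutative reduced ring and σ a ring endomorphism of R such that R satisfies the condition (C_σ^1): for all a, b ∈ R, ab = 0 implies a·σ(b) = 0. Then the Nagata extension R⊕_σR (with R viewed as a module over itself) is semicommutative and Armendariz. -/

import Mathlib

/-- The Nagata extension `R ⊕_σ M` of a commutative ring `R` by an `R`-module `M` along a
ring endomorphism `σ` of `R`: the underlying additive group is `R × M`, with multiplication
`(a, m) * (b, n) = (a * b, σ a • n + b • m)`. -/
@[nolint unusedArguments]
def Nagata (R : Type*) [CommRing R] (σ : R →+* R) (M : Type*)
    [AddCommGroup M] [Module R M] : Type _ := R × M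

namespace Nagata

variable {R : Type*} [CommRing R] {σ : R →+* R} {M : Type*} [AddCommGroup M] [Module R M]

instance : AddCommGroup (Nagata R σ M) := inferInstanceAs (AddCommGroup (R × M))

/-- The element `(a, m)` of the Nagata extension. -/
def mk (a : R) (m : M) : Nagata R σ M := (a, m)

instance : Ring (Nagata R σ M) where
  __ := (inferInstance : AddCommGroup (Nagata R σ M))
  mul x y := (x.1 * y.1, σ x.1 • y.2 + y.1 • x.2)
  one := ((1 : R), (0 : M))
  left_distrib x y z := by
    refine Prod.ext ?_ ?_
    · show x.1 * (y.1 + z.1) = x.1 * y.1 + x.1 * z.1; ring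
    · show σ x.1 • (y.2 + z.2) + (y.1 + z.1) • x.2
          = (σ x.1 • y.2 + y.1 • x.2) + (σ x.1 • z.2 + z.1 • x.2)
      rw [smul_add, add_smul]; abel
  right_distrib x y z := by
    refine Prod.ext ?_ ?_
    · show (x.1 + y.1) * z.1 = x.1 * z.1 + y.1 * z.1; ring
    · show σ (x.1 + y.1) • z.2 + z.1 • (x.2 + y.2)
          = (σ x.1 • z.2 + z.1 • x.2) + (σ y.1 • z.2 + z.1 • y.2)
      rw [map_add, add_smul, smul_add]; abel
  zero_mul x := by
    refine Prod.ext ?_ ?_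
    · show (0 : R) * x.1 = 0; ring
    · show σ (0 : R) • x.2 + x.1 • (0 : M) = 0; simp
  mul_zero x := by
    refine Prod.ext ?_ ?_
    · show x.1 * (0 : R) = 0; ring
    · show σ x.1 • (0 : M) + (0 : R) • x.2 = 0; simp
  mul_assoc x y z := by
    refine Prod.ext ?_ ?_
    · show x.1 * y.1 * z.1 = x.1 * (y.1 * z.1); ring
    · show σ (x.1 * y.1) • z.2 + z.1 • (σ x.1 • y.2 + y.1 • x.2)
          = σ x.1 • (σ y.1 • z.2 + z.1 • y.2) + (y.1 * z.1) • x.2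
      rw [map_mul, mul_smul, smul_add, smul_add, mul_smul, smul_comm z.1 (σ x.1),
        smul_comm z.1 y.1]
      abel
  one_mul x := by
    refine Prod.ext ?_ ?_
    · show 1 * x.1 = x.1; ring
    · show σ 1 • x.2 + x.1 • (0 : M) = x.2; simp
  mul_one x := by
    refine Prod.ext ?_ ?_
    · show x.1 * 1 = x.1; ring
    · show σ x.1 • (0 : M) + (1 : R) • x.2 = x.2; simp

end Nagata

/-- A ring `S` is semicommutative if `a * b = 0` implies `a * r * b = 0` for every `r`. -/
def IsSemicommutativeRing (S : Type*) [Ring S] : Prop :=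
  ∀ a b : S, a * b = 0 → ∀ r : S, a * r * b = 0

/-- A ring `S` is Armendariz if whenever polynomials over it satisfy `f * g = 0`, all
products of their coefficients vanish. -/
def IsArmendarizRing (S : Type*) [Ring S] : Prop :=
  ∀ f g : Polynomial S, f * g = 0 → ∀ i j, f.coeff i * g.coeff j = 0

/-!
Writing `x = (a, m)` and `y = (b, n)`, the product `x * y` is `(a * b, σ a * n + b * m)`. When
`a * b = 0`, condition `(C_σ^1)` gives `b * σ a = 0`, so multiplying `σ a * n + b * m = 0` by
`σ a` leaves `(σ a)^2 * n = 0`; reducedness then splits the second component, and `x * y = 0`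
becomes the three equations `a * b = 0`, `σ a * n = 0`, `b * m = 0`. Semicommutativity is immediate
from this description. For the Armendariz property, a polynomial over `R ⊕_σ R` is a pair of
polynomials over `R`, and `R[X]` is again reduced and satisfies `(C_σ^1)` for the coefficientwise
extension of `σ`, because reduced commutative rings are Armendariz. So `f * g = 0` splits into
three equations in `R[X]`, which split coefficientwise into the three equations characterising
`f_i * g_j = 0`.
-/

open Polynomial

section Reduced

variable {R : Type*} [CommRing R] [IsReduced R]

theorem IsReduced.mul_eq_zero_of_mul_self_mul_eq_zero {x y : R} (h : x * x * y = 0) :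
    x * y = 0 :=
  IsNilpotent.eq_zero ⟨2, by linear_combination y * h⟩

instance Polynomial.instIsReduced : IsReduced R[X] where
  eq_zero p hp := by
    ext n
    simpa using (Polynomial.isNilpotent_iff.mp hp n).eq_zero

-- Modulo a prime `P`, `f * g = 0` forces `f` or `g` to vanish, so `f_i * g_j` lies in every prime.
theorem Polynomial.coeff_mul_coeff_eq_zero_of_mul_eq_zero {f g : R[X]} (h : f * g = 0)
    (i j : ℕ) : f.coeff i * g.coeff j = 0 := by
  refine IsNilpotent.eq_zero (nilpotent_iff_mem_prime.mpr fun P hP => ?_)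
  have hmap : f.map (Ideal.Quotient.mk P) * g.map (Ideal.Quotient.mk P) = 0 := by
    rw [← Polynomial.map_mul, h, Polynomial.map_zero]
  rcases mul_eq_zero.mp hmap with hf | hg
  · have : Ideal.Quotient.mk P (f.coeff i) = 0 := by rw [← coeff_map, hf, coeff_zero]
    exact P.mul_mem_right _ (Ideal.Quotient.eq_zero_iff_mem.mp this)
  · have : Ideal.Quotient.mk P (g.coeff j) = 0 := by rw [← coeff_map, hg, coeff_zero]
    exact P.mul_mem_left _ (Ideal.Quotient.eq_zero_iff_mem.mp this)

end Reduced

theorem Polynomial.mul_eq_zero_of_forall_coeff_mul_coeff_eq_zero {R : Type*} [Semiring R]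
    {f g : R[X]} (h : ∀ i j, f.coeff i * g.coeff j = 0) : f * g = 0 := by
  ext k
  rw [coeff_mul, coeff_zero]
  exact Finset.sum_eq_zero fun p _ => h p.1 p.2

section ConditionC

variable {R : Type*} [CommRing R] [IsReduced R] {σ : R →+* R}

theorem Polynomial.mul_map_eq_zero_of_mul_eq_zero (hσ : ∀ a b : R, a * b = 0 → a * σ b = 0)
    {f g : R[X]} (h : f * g = 0) : f * g.map σ = 0 :=
  mul_eq_zero_of_forall_coeff_mul_coeff_eq_zero fun i j => by
    rw [coeff_map]
    exact hσ _ _ (coeff_mul_coeff_eq_zero_of_mul_eq_zero h i j)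

theorem map_mul_add_mul_eq_zero_iff (hσ : ∀ a b : R, a * b = 0 → a * σ b = 0) {a b m n : R}
    (hab : a * b = 0) : σ a * n + b * m = 0 ↔ σ a * n = 0 ∧ b * m = 0 := by
  refine ⟨fun h => ?_, fun ⟨hn, hm⟩ => by rw [hn, hm, add_zero]⟩
  have hba : b * σ a = 0 := hσ b a (by rwa [mul_comm])
  have hn : σ a * n = 0 :=
    IsReduced.mul_eq_zero_of_mul_self_mul_eq_zero (by linear_combination σ a * h - m * hba)
  exact ⟨hn, by linear_combination h - hn⟩

end ConditionC

namespace Nagata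

variable {R : Type*} [CommRing R] {σ : R →+* R}

theorem ext_iff {x y : Nagata R σ R} : x = y ↔ x.1 = y.1 ∧ x.2 = y.2 := Prod.ext_iff

theorem fst_mul (x y : Nagata R σ R) : (x * y).1 = x.1 * y.1 := rfl

theorem snd_mul (x y : Nagata R σ R) : (x * y).2 = σ x.1 * y.2 + y.1 * x.2 := rfl

theorem mul_eq_zero_iff [IsReduced R] (hσ : ∀ a b : R, a * b = 0 → a * σ b = 0)
    {x y : Nagata R σ R} :
    x * y = 0 ↔ x.1 * y.1 = 0 ∧ σ x.1 * y.2 = 0 ∧ y.1 * x.2 = 0 := by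
  rw [ext_iff, fst_mul, snd_mul]
  exact ⟨fun ⟨h1, h2⟩ => ⟨h1, (map_mul_add_mul_eq_zero_iff hσ h1).mp h2⟩,
    fun ⟨h1, h2⟩ => ⟨h1, (map_mul_add_mul_eq_zero_iff hσ h1).mpr h2⟩⟩

theorem isSemicommutativeRing [IsReduced R] (hσ : ∀ a b : R, a * b = 0 → a * σ b = 0) :
    IsSemicommutativeRing (Nagata R σ R) := by
  intro x y hxy r
  obtain ⟨h1, h2, h3⟩ := (mul_eq_zero_iff hσ).mp hxy
  have h4 : y.1 * σ x.1 = 0 := hσ _ _ (by rwa [mul_comm])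
  refine (mul_eq_zero_iff hσ).mpr ⟨?_, ?_, ?_⟩ <;> simp only [fst_mul, snd_mul, map_mul]
  · linear_combination r.1 * h1
  · linear_combination σ r.1 * h2
  · linear_combination r.2 * h4 + r.1 * h3

@[simps]
def fstHom {M : Type*} [AddCommGroup M] [Module R M] : Nagata R σ M →+* R where
  toFun x := x.1
  map_one' := rfl
  map_mul' _ _ := rfl
  map_zero' := rfl
  map_add' _ _ := rfl

noncomputable def sndPoly (f : (Nagata R σ R)[X]) : R[X] :=
  ⟨.ofCoeff (f.toFinsupp.coeff.mapRange (fun x => x.2) rfl)⟩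

@[simp]
theorem coeff_sndPoly (f : (Nagata R σ R)[X]) (n : ℕ) : (sndPoly f).coeff n = (f.coeff n).2 :=
  rfl

theorem sndPoly_mul (f g : (Nagata R σ R)[X]) :
    sndPoly (f * g) = (f.map fstHom).map σ * sndPoly g + g.map fstHom * sndPoly f := by
  rw [mul_comm (g.map fstHom)]
  ext k
  simp only [coeff_sndPoly, coeff_add, coeff_mul, coeff_map, fstHom_apply,
    ← Finset.sum_add_distrib]
  refine (Prod.snd_sum (M := R) (N := R)).trans (Finset.sum_congr rfl fun p _ => ?_)
  rw [snd_mul, mul_comm (f.coeff p.1).2]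

@[simp]
theorem sndPoly_zero : sndPoly (0 : (Nagata R σ R)[X]) = 0 := by
  ext
  rfl

theorem isArmendarizRing [IsReduced R] (hσ : ∀ a b : R, a * b = 0 → a * σ b = 0) :
    IsArmendarizRing (Nagata R σ R) := by
  intro f g hfg i j
  have h1 : f.map fstHom * g.map fstHom = 0 := by
    rw [← Polynomial.map_mul, hfg, Polynomial.map_zero]
  have h23 : (f.map fstHom).map σ * sndPoly g + g.map fstHom * sndPoly f = 0 := by
    rw [← sndPoly_mul, hfg, sndPoly_zero]
  obtain ⟨h2, h3⟩ := (map_mul_add_mul_eq_zero_iff (σ := mapRingHom σ)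
    (fun _ _ => mul_map_eq_zero_of_mul_eq_zero hσ) h1).mp h23
  refine (mul_eq_zero_iff hσ).mpr ⟨?_, ?_, ?_⟩
  · simpa using coeff_mul_coeff_eq_zero_of_mul_eq_zero h1 i j
  · simpa using coeff_mul_coeff_eq_zero_of_mul_eq_zero h2 i j
  · simpa using coeff_mul_coeff_eq_zero_of_mul_eq_zero h3 j i

end Nagata

/-- If `R` is a commutative reduced ring satisfying the condition `(C_σ^1)`
(`a * b = 0` implies `a * σ b = 0`), then the Nagata extension `R ⊕_σ R` is
semicommutative and Armendariz. -/
theorem nagata_self_semicommutative_and_armendariz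
    (R : Type*) [CommRing R] [IsReduced R] (σ : R →+* R)
    (hC1 : ∀ a b : R, a * b = 0 → a * σ b = 0) :
    IsSemicommutativeRing (Nagata R σ R) ∧ IsArmendarizRing (Nagata R σ R) :=
  ⟨Nagata.isSemicommutativeRing hC1, Nagata.isArmendarizRing hC1⟩
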